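/- arXiv:1504.07226 — 3 statements merged into one kernel-verified Lean document; each statement's English description precedes it below -/
import Mathlib

section
/- For every n ≥ 1, the family (D_{⊆I}^n)_{I ⊆ [n-1]}, indexed by all 2^{n-1} subsets I of [n-1], is linearly independent in the free ℚ-vector space 𝐒𝐣_n with basis Sj_n. -/
open scoped Classical

noncomputable section

/-- Number of distinct letters of `w` smaller than `a`. -/
def rank (w : List ℕ) (a : ℕ) : ℕ := (w.dedup.filter (fun b => b < a)).length

/-- The packing of a word over the alphabet `ℕ` (letters are 0-indexed). -/
def pack (w : List ℕ) : List ℕ := w.map (rank w)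

/-- A packed word, i.e. a word equal to its own packing.  Packed words of length `n`
whose set of letters is `{0,…,k-1}` are exactly the surjections `[n] ↠ [k]`
(written with 0-indexed values). -/
def Packed (w : List ℕ) : Prop := pack w = w

/-- The type of surjections, encoded as packed words. -/
abbrev PW := {w : List ℕ // Packed w}

/-- `𝐒𝐣`, the free `ℚ`-vector space on the set of all surjections. -/
abbrev Sj := PW →₀ ℚ

/-- All lists of length `N` with letters `< N`. -/
def candidates (N : ℕ) : Finset (List ℕ) :=
  Finset.image (fun v : Fin N → Fin N => List.ofFn (fun i => (v i : ℕ))) Finset.univ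

/-- The (finite) set of surjections `h` appearing in the product `f ⋄ g`
of two surjections: the packed words `h` of length `|f| + |g|` such that
`pack` of the first `|f|` letters of `h` is `f` and `pack` of the remaining
letters is `g`. -/
def diamondSet (f g : List ℕ) : Finset PW :=
  ((candidates (f.length + g.length)).filter
    (fun w => Packed w ∧ pack (w.take f.length) = f ∧ pack (w.drop f.length) = g)).subtype Packed

/-- The product of two basis elements of `𝐒𝐣`. -/
def diamondPW (f g : PW) : Sj := ∑ h ∈ diamondSet f.1 g.1, Finsupp.single h 1

/-- The bilinear extension `⋄` of the product of surjections to `𝐒𝐣`. -/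
def diamond (F G : Sj) : Sj :=
  F.sum fun f a => G.sum fun g b => (a * b) • diamondPW f g

/-- The empty surjection from `[0] = ∅` to itself. -/
def emptyPW : PW := ⟨[], rfl⟩

/-- The unit of `𝐒𝐣`: the empty surjection. -/
def oneSj : Sj := Finsupp.single emptyPW 1

/-- Descent set (with positions written 1-indexed, as subsets of `[n-1] = {1,…,n-1}`):
`i ∈ Desc(f)` iff `1 ≤ i ≤ n-1` and `f(i) ≥ f(i+1)`. -/
def descSet (w : List ℕ) : Finset ℕ :=
  (Finset.Icc 1 (w.length - 1)).filter (fun i => w.getD i 0 ≤ w.getD (i - 1) 0)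

/-- The (finite) set of all surjections with source `[n]`. -/
def SjWords (n : ℕ) : Finset PW :=
  ((candidates n).filter Packed).subtype Packed

/-- `D^n_{⊆ I}`: the sum of all surjections from `[n]` with descent set contained in `I`. -/
def Dsub (n : ℕ) (I : Finset ℕ) : Sj :=
  ∑ f ∈ (SjWords n).filter (fun f => descSet f.1 ⊆ I), Finsupp.single f 1

/-- `D^n_I`: the sum of all surjections from `[n]` with descent set equal to `I`. -/
def Deq (n : ℕ) (I : Finset ℕ) : Sj :=
  ∑ f ∈ (SjWords n).filter (fun f => descSet f.1 = I), Finsupp.single f 1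

lemma length_filter_lt_range (n i : ℕ) :
    ((List.range n).filter (fun x => x < i)).length = min i n := by
  induction n with
  | zero => simp
  | succ n ih =>
    rw [List.range_succ, List.filter_append, List.length_append, ih]
    by_cases h : n < i
    · simp [h]; omega
    · simp [h]; omega

lemma packed_range (n : ℕ) : Packed (List.range n) := by
  unfold Packed pack rank
  rw [List.dedup_eq_self.mpr (List.nodup_range (n := n))]
  apply List.ext_getElem (by simp)
  intro i h1 h2
  simp only [List.getElem_map, List.getElem_range, length_filter_lt_range]
  have : i < n := by simpa using h2
  omega

/-- `p_n`, the identity surjection of `[n]` (0-indexed: the word `0 1 ⋯ (n-1)`). -/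
def pWord (n : ℕ) : PW := ⟨List.range n, packed_range n⟩

/-- The set `{n₁, n₁+n₂, …, n₁+⋯+n_{k-1}}` of proper partial sums of a composition. -/
def psumsSet (c : List ℕ) : Finset ℕ :=
  (Finset.range (c.length - 1)).image (fun i => (c.take (i + 1)).sum)

/-- Iterated `⋄`-product `p_{n₁} ⋄ p_{n₂} ⋄ ⋯ ⋄ p_{n_k}` of identity surjections. -/
def diamondProd (c : List ℕ) : Sj :=
  (c.map (fun m => Finsupp.single (pWord m) (1 : ℚ))).foldr diamond oneSj

/-! Pairing with the basis vector of a surjection `f` sends `D^n_{⊆ I}` to `[Desc(f) ⊆ I]`.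
Every `J ⊆ [n-1]` is the descent set of some surjection `f_J`, e.g. the word whose `i`-th letter
is `#([1,i] \ J)`: it rises by one exactly off `J`, so its letters form an initial segment of `ℕ`.
The matrix `([Desc(f_J) ⊆ I])_{J,I}` is unitriangular for inclusion, hence the family is
independent. -/

theorem linearIndependent_of_triangular {ι R M : Type*} [PartialOrder ι] [WellFoundedGT ι]
    [Ring R] [AddCommGroup M] [Module R M] (v : ι → M) (φ : ι → M →ₗ[R] R)
    (hdiag : ∀ i, IsUnit (φ i (v i))) (htri : ∀ i j, φ j (v i) ≠ 0 → j ≤ i) :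
    LinearIndependent R v := by
  rw [linearIndependent_iff']
  intro s g hsum i
  induction i using WellFoundedGT.induction with
  | _ i ih =>
    intro hi
    have hφ : ∑ k ∈ s, g k * φ i (v k) = 0 := by
      simpa [map_sum] using congrArg (φ i) hsum
    rw [Finset.sum_eq_single_of_mem i hi] at hφ
    · exact (hdiag i).mul_left_eq_zero.mp hφ
    intro k hk hki
    by_cases h : φ i (v k) = 0
    · rw [h, mul_zero]
    · rw [ih k (lt_of_le_of_ne (htri k i h) (Ne.symm hki)) hk, zero_mul]

lemma rank_eq_self {w : List ℕ} {a : ℕ} (h : ∀ b < a, b ∈ w) : rank w a = a := by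
  have hset : (w.dedup.filter (· < a)).toFinset = Finset.range a := by
    ext b
    simp only [List.mem_toFinset, List.mem_filter, List.mem_dedup, Finset.mem_range,
      decide_eq_true_eq]
    exact ⟨And.right, fun hb => ⟨h b hb, hb⟩⟩
  rw [rank, ← List.toFinset_card_of_nodup ((List.nodup_dedup w).filter _), hset,
    Finset.card_range]

lemma packed_of_forall_lt_mem {w : List ℕ} (h : ∀ a ∈ w, ∀ b < a, b ∈ w) : Packed w :=
  (List.map_congr_left fun a ha => rank_eq_self (h a ha)).trans (List.map_id' w)

lemma mem_candidates_iff {N : ℕ} {w : List ℕ} :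
    w ∈ candidates N ↔ w.length = N ∧ ∀ a ∈ w, a < N := by
  constructor
  · intro hw
    obtain ⟨v, -, rfl⟩ := Finset.mem_image.mp hw
    simp [List.mem_ofFn]
  · rintro ⟨rfl, hlt⟩
    refine Finset.mem_image.mpr ⟨fun i => ⟨w[i], hlt _ (List.getElem_mem _)⟩, Finset.mem_univ _, ?_⟩
    simp [List.ofFn_getElem]

lemma Dsub_apply (n : ℕ) (I : Finset ℕ) (f : PW) :
    Dsub n I f = if f.1 ∈ candidates n ∧ descSet f.1 ⊆ I then 1 else 0 := by
  simp only [Dsub, Finsupp.finsetSum_apply, Finsupp.single_apply, Finset.sum_ite_eq',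
    Finset.mem_filter, SjWords, Finset.mem_subtype, f.2, and_true]

def ascentCount (J : Finset ℕ) (i : ℕ) : ℕ := (Finset.Icc 1 i \ J).card

lemma ascentCount_zero (J : Finset ℕ) : ascentCount J 0 = 0 := by simp [ascentCount]

lemma ascentCount_succ (J : Finset ℕ) (i : ℕ) :
    ascentCount J (i + 1) = ascentCount J i + if i + 1 ∈ J then 0 else 1 := by
  have hIcc : Finset.Icc 1 (i + 1) = insert (i + 1) (Finset.Icc 1 i) := by
    simpa using (Finset.insert_Icc_right_eq_Icc_succ (by simp : 1 ≤ Order.succ i)).symm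
  rw [ascentCount, hIcc]
  split_ifs with h
  · rw [Finset.insert_sdiff_of_mem _ h, ascentCount, add_zero]
  · rw [Finset.insert_sdiff_of_notMem _ h, Finset.card_insert_of_notMem (by simp), ascentCount]

lemma ascentCount_le (J : Finset ℕ) (i : ℕ) : ascentCount J i ≤ i :=
  (Finset.card_le_card Finset.sdiff_subset).trans (by simp)

lemma exists_ascentCount_eq (J : Finset ℕ) {i b : ℕ} (hb : b ≤ ascentCount J i) :
    ∃ k ≤ i, ascentCount J k = b := by
  induction i with
  | zero => exact ⟨0, le_rfl, by simp_all [ascentCount_zero]⟩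
  | succ i ih =>
    rcases hb.lt_or_eq with hlt | heq
    · have : b ≤ ascentCount J i := by rw [ascentCount_succ] at hlt; split_ifs at hlt <;> omega
      obtain ⟨k, hk, hkb⟩ := ih this
      exact ⟨k, by omega, hkb⟩
    · exact ⟨i + 1, le_rfl, heq.symm⟩

def wordWithDescents (n : ℕ) (J : Finset ℕ) : List ℕ := (List.range n).map (ascentCount J)

lemma mem_wordWithDescents {n : ℕ} {J : Finset ℕ} {a : ℕ} :
    a ∈ wordWithDescents n J ↔ ∃ i < n, ascentCount J i = a := by
  simp [wordWithDescents]

lemma packed_wordWithDescents (n : ℕ) (J : Finset ℕ) : Packed (wordWithDescents n J) := by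
  refine packed_of_forall_lt_mem fun a ha b hb => ?_
  obtain ⟨i, hi, rfl⟩ := mem_wordWithDescents.mp ha
  obtain ⟨k, hk, rfl⟩ := exists_ascentCount_eq J hb.le
  exact mem_wordWithDescents.mpr ⟨k, by omega, rfl⟩

lemma wordWithDescents_mem_candidates (n : ℕ) (J : Finset ℕ) :
    wordWithDescents n J ∈ candidates n := by
  refine mem_candidates_iff.mpr ⟨by simp [wordWithDescents], fun a ha => ?_⟩
  obtain ⟨i, hi, rfl⟩ := mem_wordWithDescents.mp ha
  exact (ascentCount_le J i).trans_lt hi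

lemma getD_wordWithDescents {n i : ℕ} (J : Finset ℕ) (hi : i < n) :
    (wordWithDescents n J).getD i 0 = ascentCount J i := by
  simp [wordWithDescents, hi]

lemma descSet_wordWithDescents {n : ℕ} {J : Finset ℕ} (hJ : J ⊆ Finset.Icc 1 (n - 1)) :
    descSet (wordWithDescents n J) = J := by
  have hdesc : ∀ i ∈ Finset.Icc 1 (n - 1), ((wordWithDescents n J).getD i 0 ≤
      (wordWithDescents n J).getD (i - 1) 0 ↔ i ∈ J) := by
    intro i hi
    obtain ⟨hi1, hin⟩ := Finset.mem_Icc.mp hi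
    obtain ⟨j, rfl⟩ : ∃ j, i = j + 1 := Nat.exists_eq_add_one.mpr hi1
    rw [getD_wordWithDescents J (by omega), getD_wordWithDescents J (by omega),
      Nat.add_sub_cancel, ascentCount_succ]
    split_ifs with h <;> simp [h]
  ext i
  simp only [descSet, Finset.mem_filter, wordWithDescents, List.length_map, List.length_range]
  exact ⟨fun ⟨hi, hle⟩ => (hdesc i hi).mp hle, fun h => ⟨hJ h, (hdesc i (hJ h)).mpr h⟩⟩

def surjWithDescents (n : ℕ) (J : Finset ℕ) : PW :=
  ⟨wordWithDescents n J, packed_wordWithDescents n J⟩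

lemma Dsub_apply_surjWithDescents {n : ℕ} {J : Finset ℕ} (hJ : J ⊆ Finset.Icc 1 (n - 1))
    (I : Finset ℕ) : Dsub n I (surjWithDescents n J) = if J ⊆ I then 1 else 0 := by
  simp only [Dsub_apply, surjWithDescents, wordWithDescents_mem_candidates,
    descSet_wordWithDescents hJ, true_and]

theorem linearIndependent_Dsub_general (n : ℕ) :
    LinearIndependent ℚ
      (fun I : {I : Finset ℕ // I ⊆ Finset.Icc 1 (n - 1)} => Dsub n I.1) := by
  refine linearIndependent_of_triangular _ (fun J => Finsupp.lapply (surjWithDescents n J.1))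
    (fun I => ?_) (fun I J hJI => ?_)
  · simp [Dsub_apply_surjWithDescents I.2]
  · by_contra h
    simp [Dsub_apply_surjWithDescents J.2, Subtype.coe_le_coe.not.mpr h] at hJI

/-- For every `n ≥ 1`, the family `(D^n_{⊆ I})_{I ⊆ [n-1]}`, indexed by
all `2^{n-1}` subsets `I` of `[n-1] = {1,…,n-1}`, is linearly independent in the free
ℚ-vector space `𝐒𝐣_n` with basis `Sj_n` (here realized inside `𝐒𝐣`). -/
theorem linearIndependent_Dsub (n : ℕ) (hn : 1 ≤ n) :
    LinearIndependent ℚ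
      (fun I : {I : Finset ℕ // I ⊆ Finset.Icc 1 (n - 1)} => Dsub n I.1) :=
  linearIndependent_Dsub_general n

end
end

section
/- For every composition (n_1,…,n_k) of n (i.e., positive integers with n_1+⋯+n_k = n), the ⋄-product p_{n_1} ⋄ p_{n_2} ⋄ ⋯ ⋄ p_{n_k} of identity surjections equals D^n_{⊆{n_1, n_1+n_2, …, n_1+⋯+n_{k-1}}}, the sum of all surjections f ∈ Sj_n whose descent set is contained in {n_1, n_1+n_2, …, n_1+⋯+n_{k-1}}. -/
open scoped Classical

noncomputable section

/-! Multiplying by `p_m` on the left shifts descent conditions. A word `h` of length `m + n`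
occurs in `p_m ⋄ g` iff its first `m` letters increase strictly (their packing is then `p_m`)
and its last `n` letters pack to `g`; as packing preserves descent sets, `h` runs over the
words whose descents lie in `{m} ∪ (Desc(g) + m)`. Summing over `g` with `Desc(g) ⊆ I` gives
`p_m ⋄ D^n_{⊆I} = D^{m+n}_{⊆{m} ∪ (I + m)}`, and the theorem follows by induction on the
composition. -/

open Finset

section Pack

variable {w : List ℕ} {a b : ℕ}

lemma rank_eq_card (w : List ℕ) (a : ℕ) : rank w a = #{b ∈ w.toFinset | b < a} := by
  rw [rank, ← List.toFinset_card_of_nodup (w.nodup_dedup.filter _)]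
  congr 1
  ext
  simp

lemma rank_strictMonoOn (w : List ℕ) : StrictMonoOn (rank w) {a | a ∈ w} := by
  intro a ha b _ hab
  simp only [rank_eq_card]
  refine card_lt_card ((ssubset_iff_of_subset fun x => ?_).2 ⟨a, ?_⟩)
  · simp only [mem_filter]
    exact fun h => ⟨h.1, h.2.trans hab⟩
  · simpa using ⟨ha, hab⟩

lemma rank_lt_length (ha : a ∈ w) : rank w a < w.length := by
  rw [rank_eq_card]
  refine (card_lt_card (filter_ssubset (p := (· < a)).2 ⟨a, ?_, lt_irrefl a⟩)).trans_le
    w.toFinset_card_le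
  simpa using ha

lemma length_pack (w : List ℕ) : (pack w).length = w.length := List.length_map _

lemma getD_pack (h : a < w.length) : (pack w).getD a 0 = rank w (w.getD a 0) := by
  simp [pack, h]

lemma Packed.lt_length (hw : Packed w) (hb : b ∈ w) : b < w.length := by
  rw [← hw] at hb
  obtain ⟨a, ha, rfl⟩ := List.mem_map.1 hb
  exact rank_lt_length ha

lemma rank_pack_rank (ha : a ∈ w) : rank (pack w) (rank w a) = rank w a := by
  have hinj : Set.InjOn (rank w) {b | b ∈ w.toFinset ∧ rank w b < rank w a} :=
    (rank_strictMonoOn w).injOn.mono fun b hb => List.mem_toFinset.1 hb.1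
  have himage : (pack w).toFinset = w.toFinset.image (rank w) := by
    ext
    simp [pack]
  rw [rank_eq_card, himage, filter_image, card_image_of_injOn (by simpa using hinj),
    rank_eq_card]
  congr 1
  exact filter_congr fun b hb => (rank_strictMonoOn w).lt_iff_lt (List.mem_toFinset.1 hb) ha

lemma packed_pack (w : List ℕ) : Packed (pack w) := by
  rw [Packed, pack, pack, List.map_map]
  exact List.map_congr_left fun a ha => rank_pack_rank ha

lemma filter_lt_append_cons_of_pairwise {l₁ l₂ : List ℕ} {x : ℕ}
    (h : (l₁ ++ x :: l₂).Pairwise (· < ·)) : (l₁ ++ x :: l₂).filter (· < x) = l₁ := by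
  rw [List.pairwise_append, List.pairwise_cons] at h
  rw [List.filter_append, List.filter_eq_self.2, List.filter_eq_nil_iff.2, List.append_nil]
  · simp only [List.mem_cons, decide_eq_true_eq, not_lt]
    rintro y (rfl | hy)
    exacts [le_rfl, (h.2.1.1 y hy).le]
  · simpa using fun y hy => h.2.2 y hy x List.mem_cons_self

lemma pack_eq_range_of_pairwise (h : w.Pairwise (· < ·)) : pack w = List.range w.length := by
  refine List.ext_getElem (by simp [length_pack]) fun i hi _ => ?_
  rw [length_pack] at hi
  have hsplit := List.take_append_drop i w
  rw [List.drop_eq_getElem_cons hi] at hsplit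
  have hfilter := filter_lt_append_cons_of_pairwise (hsplit ▸ h)
  rw [hsplit] at hfilter
  simp [pack, rank, List.dedup_eq_self.2 h.nodup, hfilter, hi.le]

end Pack

section Descents

variable {w : List ℕ} {m i j : ℕ}

lemma mem_descSet : i ∈ descSet w ↔ 1 ≤ i ∧ i < w.length ∧ w.getD i 0 ≤ w.getD (i - 1) 0 := by
  simp only [descSet, mem_filter, mem_Icc]
  omega

lemma getD_mem (h : i < w.length) : w.getD i 0 ∈ w := by
  rw [List.getD_eq_getElem _ _ h]
  exact List.getElem_mem h

lemma descSet_pack (w : List ℕ) : descSet (pack w) = descSet w := by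
  ext i
  simp only [mem_descSet, length_pack]
  refine and_congr_right fun hi => and_congr_right fun hiw => ?_
  rw [getD_pack hiw, getD_pack (by omega)]
  exact (rank_strictMonoOn w).le_iff_le (getD_mem hiw) (getD_mem (by omega))

lemma descSet_range (n : ℕ) : descSet (List.range n) = ∅ := by
  ext i
  simp only [mem_descSet, List.length_range, notMem_empty, iff_false]
  rintro ⟨hi, hin, hle⟩
  rw [List.getD_eq_getElem _ _ (by simpa), List.getD_eq_getElem _ _ (by simp; omega)] at hle
  simp only [List.getElem_range] at hle
  omega

lemma pairwise_lt_of_descSet_eq_empty (h : descSet w = ∅) : w.Pairwise (· < ·) := by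
  refine List.isChain_iff_pairwise.1 (List.isChain_iff_getElem.2 fun i hi => ?_)
  have : i + 1 ∉ descSet w := h ▸ notMem_empty _
  simpa [mem_descSet, hi, List.getD_eq_getElem, Nat.lt_of_succ_lt hi] using this

lemma pack_eq_range_iff : pack w = List.range w.length ↔ descSet w = ∅ :=
  ⟨fun h => by rw [← descSet_pack, h, descSet_range],
    fun h => pack_eq_range_of_pairwise (pairwise_lt_of_descSet_eq_empty h)⟩

lemma mem_descSet_take (hi : i < m) : i ∈ descSet (w.take m) ↔ i ∈ descSet w := by
  simp only [mem_descSet, List.length_take, List.getD_eq_getElem?_getD, List.getElem?_take,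
    if_pos hi, if_pos (show i - 1 < m by omega)]
  omega

lemma mem_descSet_drop (hj : 1 ≤ j) : j ∈ descSet (w.drop m) ↔ m + j ∈ descSet w := by
  simp only [mem_descSet, List.length_drop, List.getD_eq_getElem?_getD, List.getElem?_drop,
    show m + j - 1 = m + (j - 1) by omega]
  omega

lemma descSet_subset_insert_iff {I : Finset ℕ} :
    descSet w ⊆ insert m (I.image (· + m)) ↔ descSet (w.take m) = ∅ ∧ descSet (w.drop m) ⊆ I := by
  constructor
  · intro h
    refine ⟨eq_empty_of_forall_notMem fun i hi => ?_, fun j hj => ?_⟩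
    · have him : i < m := (mem_descSet.1 hi).2.1.trans_le (List.length_take_le _ _)
      have := h ((mem_descSet_take him).1 hi)
      simp only [mem_insert, mem_image] at this
      omega
    · have hj1 := (mem_descSet.1 hj).1
      have := h ((mem_descSet_drop hj1).1 hj)
      simp only [mem_insert, mem_image] at this
      obtain hjm | ⟨x, hx, hxj⟩ := this
      · omega
      · rwa [← show x = j by omega]
  · rintro ⟨htake, hdrop⟩ i hi
    rcases lt_trichotomy i m with him | rfl | hmi
    · simpa [htake] using (mem_descSet_take him).2 hi
    · exact mem_insert_self _ _
    · refine mem_insert_of_mem (mem_image.2 ⟨i - m, hdrop ?_, by omega⟩)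
      rwa [mem_descSet_drop (by omega), Nat.add_sub_cancel' hmi.le]

end Descents

lemma mem_candidates {N : ℕ} {w : List ℕ} : w ∈ candidates N ↔ w.length = N ∧ ∀ x ∈ w, x < N := by
  constructor
  · rintro hw
    obtain ⟨v, -, rfl⟩ := mem_image.1 hw
    simp
  · rintro ⟨rfl, hlt⟩
    refine mem_image.2 ⟨fun i => ⟨w[i], hlt _ (List.getElem_mem _)⟩, mem_univ _, ?_⟩
    exact List.ext_getElem (by simp) fun i _ _ => by simp

lemma mem_SjWords {n : ℕ} {f : PW} : f ∈ SjWords n ↔ f.1.length = n := by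
  simp only [SjWords, mem_subtype, mem_filter, mem_candidates]
  exact ⟨fun h => h.1.1, fun hl => ⟨⟨hl, fun x hx => hl ▸ f.2.lt_length hx⟩, f.2⟩⟩

lemma mem_diamondSet {f g : List ℕ} {h : PW} :
    h ∈ diamondSet f g ↔ h.1.length = f.length + g.length ∧
      pack (h.1.take f.length) = f ∧ pack (h.1.drop f.length) = g := by
  simp only [diamondSet, mem_subtype, mem_filter, mem_candidates]
  exact ⟨fun ⟨⟨hl, _⟩, _, hf, hg⟩ => ⟨hl, hf, hg⟩,
    fun ⟨hl, hf, hg⟩ => ⟨⟨hl, fun x hx => hl ▸ h.2.lt_length hx⟩, h.2, hf, hg⟩⟩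

lemma disjoint_diamondSet (f : List ℕ) {g₁ g₂ : List ℕ} (hne : g₁ ≠ g₂) :
    Disjoint (diamondSet f g₁) (diamondSet f g₂) :=
  disjoint_left.2 fun _ h₁ h₂ =>
    hne ((mem_diamondSet.1 h₁).2.2.symm.trans (mem_diamondSet.1 h₂).2.2)

lemma diamond_single_sum_single (f : PW) (S : Finset PW) :
    diamond (Finsupp.single f 1) (∑ g ∈ S, Finsupp.single g 1) = ∑ g ∈ S, diamondPW f g := by
  rw [diamond, Finsupp.sum_single_index (by simp)]
  simp only [one_mul]
  rw [← Finsupp.linearCombination_apply (v := diamondPW f) ℚ, map_sum]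
  simp [Finsupp.linearCombination_single]

lemma biUnion_diamondSet_range (m n : ℕ) (I : Finset ℕ) :
    {g ∈ SjWords n | descSet g.1 ⊆ I}.biUnion (fun g => diamondSet (List.range m) g.1) =
      {h ∈ SjWords (m + n) | descSet h.1 ⊆ insert m (I.image (· + m))} := by
  ext h
  simp only [mem_biUnion, mem_filter, mem_SjWords, mem_diamondSet, List.length_range,
    descSet_subset_insert_iff]
  constructor
  · rintro ⟨g, ⟨hgn, hgI⟩, hlen, htake, hdrop⟩
    refine ⟨by rw [hlen, hgn], pack_eq_range_iff.1 ?_, by rwa [← descSet_pack, hdrop]⟩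
    rwa [List.length_take, min_eq_left (by omega)]
  · rintro ⟨hlen, htake, hdrop⟩
    refine ⟨⟨pack (h.1.drop m), packed_pack _⟩, ⟨by simp [length_pack, hlen], ?_⟩, ?_⟩
    · rwa [descSet_pack]
    · have htake' := pack_eq_range_iff.2 htake
      rw [List.length_take, min_eq_left (by omega)] at htake'
      exact ⟨by simp [length_pack, hlen], htake', rfl⟩

lemma single_pWord_diamond_Dsub (m n : ℕ) (I : Finset ℕ) :
    diamond (Finsupp.single (pWord m) 1) (Dsub n I) =
      Dsub (m + n) (insert m (I.image (· + m))) := by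
  rw [Dsub, diamond_single_sum_single, Dsub, ← biUnion_diamondSet_range, sum_biUnion]
  · rfl
  · exact fun g₁ _ g₂ _ hne => disjoint_diamondSet _ (Subtype.coe_injective.ne hne)

lemma Dsub_zero (I : Finset ℕ) : Dsub 0 I = oneSj := by
  have : {f ∈ SjWords 0 | descSet f.1 ⊆ I} = {emptyPW} := by
    ext f
    simp only [mem_filter, mem_singleton, mem_SjWords, List.length_eq_zero_iff]
    refine ⟨fun h => Subtype.ext h.1, ?_⟩
    rintro rfl
    exact ⟨rfl, by simp [emptyPW, descSet]⟩
  rw [Dsub, this, sum_singleton, oneSj]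

lemma Dsub_insert_self (n : ℕ) (I : Finset ℕ) : Dsub n (insert n I) = Dsub n I := by
  have hn : ∀ f ∈ SjWords n, n ∉ descSet f.1 := fun f hf hn =>
    (mem_descSet.1 hn).2.1.ne (mem_SjWords.1 hf).symm
  simp only [Dsub, filter_congr fun f hf => subset_insert_iff_of_notMem (hn f hf)]

lemma psumsSet_cons (m : ℕ) {L : List ℕ} (hL : L ≠ []) :
    psumsSet (m :: L) = insert m ((psumsSet L).image (· + m)) := by
  have hlen : 0 < L.length := List.length_pos_iff.2 hL
  ext x
  simp only [psumsSet, mem_image, mem_range, mem_insert, List.length_cons, Nat.add_sub_cancel]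
  constructor
  · rintro ⟨_ | j, hj, rfl⟩
    · simp
    · exact .inr ⟨_, ⟨j, by omega, rfl⟩, by rw [List.take_succ_cons, List.sum_cons, add_comm]⟩
  · rintro (rfl | ⟨_, ⟨j, hj, rfl⟩, rfl⟩)
    · exact ⟨0, hlen, by simp⟩
    · exact ⟨j + 1, by omega, by rw [List.take_succ_cons, List.sum_cons, add_comm]⟩

lemma diamondProd_cons (m : ℕ) (L : List ℕ) :
    diamondProd (m :: L) = diamond (Finsupp.single (pWord m) 1) (diamondProd L) := rfl

theorem diamondProd_p_eq_Dsub_general (n : ℕ) (L : List ℕ) (hsum : L.sum = n) :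
    diamondProd L = Dsub n (psumsSet L) := by
  subst hsum
  induction L with
  | nil => exact (Dsub_zero _).symm
  | cons m L ih =>
    rw [diamondProd_cons, ih, single_pWord_diamond_Dsub, List.sum_cons]
    rcases eq_or_ne L [] with rfl | hL
    · simpa [psumsSet] using Dsub_insert_self m ∅
    · rw [psumsSet_cons m hL]

/-- For every composition `(n₁,…,n_k)` of `n` (positive entries summing
to `n`), the `⋄`-product `p_{n₁} ⋄ p_{n₂} ⋄ ⋯ ⋄ p_{n_k}` of identity surjections equals
`D^n_{⊆{n₁, n₁+n₂, …, n₁+⋯+n_{k-1}}}`, the sum of all surjections from `[n]` whose descent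
set is contained in `{n₁, n₁+n₂, …, n₁+⋯+n_{k-1}}`. -/
theorem diamondProd_p_eq_Dsub (n : ℕ) (L : List ℕ) (hL : L ≠ [])
    (hpos : ∀ x ∈ L, 0 < x) (hsum : L.sum = n) :
    diamondProd L = Dsub n (psumsSet L) :=
  diamondProd_p_eq_Dsub_general n L hsum

end
end

section
/- The quasi-shuffle product ⧢ on the tensor module T(A) over a commutative associative ℚ-algebra A is associative: (x ⧢ y) ⧢ z = x ⧢ (y ⧢ z) for all x, y, z ∈ T(A); hence (T(A), ⧢) is a commutative associative unital ℚ-algebra with unit the empty word. -/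
open scoped Classical

noncomputable section

variable {A : Type*} [AddCommGroup A] [Module ℚ A]

/-- The word `a₁⋯a_n` as an element of the tensor module
`T(A) = ⊕_{n ≥ 0} A^{⊗n}`, realized as the tensor algebra of the module `A`
(its product is concatenation of words). -/
def word (l : List A) : TensorAlgebra ℚ A :=
  (l.map fun a => TensorAlgebra.ι ℚ a).prod

/-!
Since `⧢` is bilinear and the words span `T(A)`, the recursion for `x a ⧢ y b` holds for all
`x, y ∈ T(A)`, and commutativity and associativity need only be checked on words, by induction
on their lengths, peeling off last letters. For associativity, both sides of
`(x a ⧢ y b) ⧢ z c = x a ⧢ (y b ⧢ z c)` expand into the same seven terms, one for each nonempty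
set of the letters `a, b, c` multiplied together into the last position; the term for
`{a, b, c}` is where the associativity of `∗` enters.
-/

open TensorAlgebra

theorem word_nil : word ([] : List A) = 1 := rfl

theorem word_append (l m : List A) : word (l ++ m) = word l * word m := by
  simp [word]

theorem word_concat (l : List A) (a : A) : word (l ++ [a]) = word l * ι ℚ a := by
  simp [word]

theorem span_range_word : Submodule.span ℚ (Set.range (word (A := A))) = ⊤ := by
  have hclosure : (Submonoid.closure (Set.range (ι ℚ (M := A))) : Set (TensorAlgebra ℚ A)) ⊆
      Set.range word := by
    intro x hx
    induction hx using Submonoid.closure_induction with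
    | mem _ h => obtain ⟨a, rfl⟩ := h; exact ⟨[a], by simp [word]⟩
    | one => exact ⟨[], word_nil⟩
    | mul _ _ _ _ hx hy =>
      obtain ⟨l, rfl⟩ := hx
      obtain ⟨m, rfl⟩ := hy
      exact ⟨l ++ m, word_append l m⟩
  rw [eq_top_iff, ← Algebra.top_toSubmodule, ← adjoin_range_ι, Algebra.adjoin_eq_span]
  exact Submodule.span_mono hclosure

theorem LinearMap.ext_word {M : Type*} [AddCommGroup M] [Module ℚ M]
    {f g : TensorAlgebra ℚ A →ₗ[ℚ] M} (h : ∀ l, f (word l) = g (word l)) : f = g :=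
  LinearMap.ext_on span_range_word (by rintro _ ⟨l, rfl⟩; exact h l)

theorem LinearMap.ext_word₂ {M : Type*} [AddCommGroup M] [Module ℚ M]
    {f g : TensorAlgebra ℚ A →ₗ[ℚ] TensorAlgebra ℚ A →ₗ[ℚ] M}
    (h : ∀ l m, f (word l) (word m) = g (word l) (word m)) : f = g :=
  LinearMap.ext_word fun l => LinearMap.ext_word (h l)

structure IsQuasiShuffle (mul : A →ₗ[ℚ] A →ₗ[ℚ] A)
    (sh : TensorAlgebra ℚ A →ₗ[ℚ] TensorAlgebra ℚ A →ₗ[ℚ] TensorAlgebra ℚ A) : Prop where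
  one_left : ∀ x, sh 1 x = x
  one_right : ∀ x, sh x 1 = x
  word_mul_ι_word_mul_ι : ∀ (l m : List A) (a b : A),
    sh (word l * ι ℚ a) (word m * ι ℚ b)
      = sh (word l) (word m * ι ℚ b) * ι ℚ a + sh (word l * ι ℚ a) (word m) * ι ℚ b
        + sh (word l) (word m) * ι ℚ (mul a b)

namespace IsQuasiShuffle

variable {mul : A →ₗ[ℚ] A →ₗ[ℚ] A}
  {sh : TensorAlgebra ℚ A →ₗ[ℚ] TensorAlgebra ℚ A →ₗ[ℚ] TensorAlgebra ℚ A}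

theorem mul_ι_mul_ι (h : IsQuasiShuffle mul sh) (x y : TensorAlgebra ℚ A) (a b : A) :
    sh (x * ι ℚ a) (y * ι ℚ b)
      = sh x (y * ι ℚ b) * ι ℚ a + sh (x * ι ℚ a) y * ι ℚ b + sh x y * ι ℚ (mul a b) := by
  let r : A → TensorAlgebra ℚ A →ₗ[ℚ] TensorAlgebra ℚ A := fun c => LinearMap.mulRight ℚ (ι ℚ c)
  have hext : (sh ∘ₗ r a).compl₂ (r b)
      = ((sh.compl₂ (r b)).compr₂ (r a) + (sh ∘ₗ r a).compr₂ (r b)) + sh.compr₂ (r (mul a b)) :=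
    LinearMap.ext_word₂ fun l m => h.word_mul_ι_word_mul_ι l m a b
  exact LinearMap.congr_fun₂ hext x y

theorem comm_step (h : IsQuasiShuffle mul sh) (hmul_comm : ∀ a b : A, mul a b = mul b a)
    {x y : TensorAlgebra ℚ A} {a b : A}
    (h₁ : sh x (y * ι ℚ b) = sh (y * ι ℚ b) x) (h₂ : sh (x * ι ℚ a) y = sh y (x * ι ℚ a))
    (h₃ : sh x y = sh y x) :
    sh (x * ι ℚ a) (y * ι ℚ b) = sh (y * ι ℚ b) (x * ι ℚ a) := by
  rw [h.mul_ι_mul_ι, h.mul_ι_mul_ι, h₁, h₂, h₃, hmul_comm a b]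
  abel

theorem comm_word (h : IsQuasiShuffle mul sh) (hmul_comm : ∀ a b : A, mul a b = mul b a)
    (l m : List A) : sh (word l) (word m) = sh (word m) (word l) := by
  induction l using List.reverseRecOn generalizing m with
  | nil => rw [word_nil, h.one_left, h.one_right]
  | append_singleton l a ihl =>
    induction m using List.reverseRecOn with
    | nil => rw [word_nil, h.one_left, h.one_right]
    | append_singleton m b ihm =>
      simp only [word_concat] at ihm ⊢
      exact h.comm_step hmul_comm (by simpa only [word_concat] using ihl (m ++ [b])) ihm (ihl m)

theorem comm (h : IsQuasiShuffle mul sh) (hmul_comm : ∀ a b : A, mul a b = mul b a)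
    (x y : TensorAlgebra ℚ A) : sh x y = sh y x :=
  LinearMap.congr_fun₂ (LinearMap.ext_word₂ (f := sh) (g := sh.flip) (h.comm_word hmul_comm)) x y

theorem assoc_step (h : IsQuasiShuffle mul sh)
    (hmul_assoc : ∀ a b c : A, mul (mul a b) c = mul a (mul b c))
    {x y z : TensorAlgebra ℚ A} {a b c : A}
    (hx : ∀ y' ∈ ({y, y * ι ℚ b} : Set _), ∀ z' ∈ ({z, z * ι ℚ c} : Set _),
      sh (sh x y') z' = sh x (sh y' z'))
    (hy : ∀ z' ∈ ({z, z * ι ℚ c} : Set _), sh (sh (x * ι ℚ a) y) z' = sh (x * ι ℚ a) (sh y z'))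
    (hz : sh (sh (x * ι ℚ a) (y * ι ℚ b)) z = sh (x * ι ℚ a) (sh (y * ι ℚ b) z)) :
    sh (sh (x * ι ℚ a) (y * ι ℚ b)) (z * ι ℚ c) = sh (x * ι ℚ a) (sh (y * ι ℚ b) (z * ι ℚ c)) := by
  set X := x * ι ℚ a
  set Y := y * ι ℚ b
  set Z := z * ι ℚ c
  simp only [Set.mem_insert_iff, Set.mem_singleton_iff, forall_eq_or_imp, forall_eq] at hx hy
  obtain ⟨⟨hx₁, hx₂⟩, hx₃, hx₄⟩ := hx
  obtain ⟨hy₁, hy₂⟩ := hy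
  calc sh (sh X Y) Z
      = sh x (sh Y Z) * ι ℚ a + sh X (sh y Z) * ι ℚ b + sh X (sh Y z) * ι ℚ c
        + sh x (sh y Z) * ι ℚ (mul a b) + sh x (sh Y z) * ι ℚ (mul a c)
        + sh X (sh y z) * ι ℚ (mul b c) + sh x (sh y z) * ι ℚ (mul a (mul b c)) := by
        rw [← hz, h.mul_ι_mul_ι x y a b]
        simp only [map_add, LinearMap.add_apply, add_mul]
        rw [h.mul_ι_mul_ι (sh x Y) z a c, h.mul_ι_mul_ι (sh X y) z b c,
          h.mul_ι_mul_ι (sh x y) z (mul a b) c, hx₁, hx₂, hx₃, hx₄, hy₁, hy₂, hmul_assoc]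
        abel
    _ = sh X (sh Y Z) := by
        rw [h.mul_ι_mul_ι y z b c]
        simp only [map_add]
        rw [h.mul_ι_mul_ι x (sh y Z) a b, h.mul_ι_mul_ι x (sh Y z) a c,
          h.mul_ι_mul_ι x (sh y z) a (mul b c)]
        simp only [add_mul]
        abel

theorem assoc_word (h : IsQuasiShuffle mul sh)
    (hmul_assoc : ∀ a b c : A, mul (mul a b) c = mul a (mul b c)) (l m n : List A) :
    sh (sh (word l) (word m)) (word n) = sh (word l) (sh (word m) (word n)) := by
  induction l using List.reverseRecOn generalizing m n with
  | nil => rw [word_nil, h.one_left, h.one_left]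
  | append_singleton l a ihl =>
    induction m using List.reverseRecOn generalizing n with
    | nil => rw [word_nil, h.one_left, h.one_right]
    | append_singleton m b ihm =>
      induction n using List.reverseRecOn with
      | nil => rw [word_nil, h.one_right, h.one_right]
      | append_singleton n c ihn =>
        simp only [word_concat] at ihn ⊢
        refine h.assoc_step hmul_assoc ?_ ?_ ihn
        · rintro _ (rfl | rfl) _ (rfl | rfl) <;> simp only [← word_concat, ihl]
        · rintro _ (rfl | rfl) <;> simp only [← word_concat, ihm]

theorem assoc (h : IsQuasiShuffle mul sh)
    (hmul_assoc : ∀ a b c : A, mul (mul a b) c = mul a (mul b c)) (x y z : TensorAlgebra ℚ A) :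
    sh (sh x y) z = sh x (sh y z) := by
  have hwords₂ (l m : List A) (z : TensorAlgebra ℚ A) :
      sh (sh (word l) (word m)) z = sh (word l) (sh (word m) z) :=
    LinearMap.congr_fun (LinearMap.ext_word (f := sh (sh (word l) (word m)))
      (g := sh (word l) ∘ₗ sh (word m)) (h.assoc_word hmul_assoc l m)) z
  have hwords₁ (l : List A) (y z : TensorAlgebra ℚ A) :
      sh (sh (word l) y) z = sh (word l) (sh y z) :=
    LinearMap.congr_fun (LinearMap.ext_word (f := sh.flip z ∘ₗ sh (word l))
      (g := sh (word l) ∘ₗ sh.flip z) fun m => hwords₂ l m z) y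
  exact LinearMap.congr_fun (LinearMap.ext_word (f := sh.flip z ∘ₗ sh.flip y)
    (g := sh.flip (sh y z)) fun l => hwords₁ l y z) x

end IsQuasiShuffle

/-- The quasi-shuffle product `⧢` on the tensor module `T(A)` over a
commutative associative ℚ-algebra `(A, ∗)` is associative; hence `(T(A), ⧢)` is a
commutative associative unital ℚ-algebra with unit the empty word. -/
theorem quasiShuffle_assoc
    (mul : A →ₗ[ℚ] A →ₗ[ℚ] A)
    (hmul_comm : ∀ a b : A, mul a b = mul b a)
    (hmul_assoc : ∀ a b c : A, mul (mul a b) c = mul a (mul b c))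
    (up down bul sh :
      TensorAlgebra ℚ A →ₗ[ℚ] TensorAlgebra ℚ A →ₗ[ℚ] TensorAlgebra ℚ A)
    (hsh_one_left : ∀ x, sh 1 x = x)
    (hsh_one_right : ∀ x, sh x 1 = x)
    (hsh_sum : ∀ (l m : List A) (a b : A),
      sh (word (l ++ [a])) (word (m ++ [b]))
        = up (word (l ++ [a])) (word (m ++ [b]))
          + down (word (l ++ [a])) (word (m ++ [b]))
          + bul (word (l ++ [a])) (word (m ++ [b])))
    (hup : ∀ (l m : List A) (a b : A),
      up (word (l ++ [a])) (word (m ++ [b]))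
        = sh (word l) (word (m ++ [b])) * TensorAlgebra.ι ℚ a)
    (hdown : ∀ (l m : List A) (a b : A),
      down (word (l ++ [a])) (word (m ++ [b]))
        = sh (word (l ++ [a])) (word m) * TensorAlgebra.ι ℚ b)
    (hbul : ∀ (l m : List A) (a b : A),
      bul (word (l ++ [a])) (word (m ++ [b]))
        = sh (word l) (word m) * TensorAlgebra.ι ℚ (mul a b))
    : (∀ x y z : TensorAlgebra ℚ A, sh (sh x y) z = sh x (sh y z))
      ∧ (∀ x y : TensorAlgebra ℚ A, sh x y = sh y x)
      ∧ (∀ x : TensorAlgebra ℚ A, sh (word ([] : List A)) x = x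
            ∧ sh x (word ([] : List A)) = x) := by
  have h : IsQuasiShuffle mul sh :=
    { one_left := hsh_one_left
      one_right := hsh_one_right
      word_mul_ι_word_mul_ι := fun l m a b => by
        rw [← word_concat, ← word_concat, hsh_sum, hup, hdown, hbul, word_concat, word_concat] }
  exact ⟨h.assoc hmul_assoc, h.comm hmul_comm,
    fun x => ⟨hsh_one_left x, hsh_one_right x⟩⟩

end
end
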